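/- arXiv:2303.09298 — 3 statements merged into one kernel-verified Lean document; each statement's English description precedes it below -/
import Mathlib

section
/- Let G be a group, H a normal subgroup of G, F an algebraically closed field, and ρ, ρ' : G → GL(n, F) two representations whose restrictions to H are equal and such that the common restriction ρ|_H is irreducible (its only intertwining endomorphisms are scalars, by Schur's lemma). Then there exists a group homomorphism χ : G → Fˣ with χ(h) = 1 for all h ∈ H such that ρ'(g) = χ(g) · ρ(g) for all g ∈ G. -/
/-- If two representations of `G` agree on a normal subgroup `H`, and the common
restriction to `H` is irreducible (its only intertwiners are scalars), then the
two representations differ by a character of `G` trivial on `H`. -/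
theorem stmt_1 {G : Type*} [Group G] (H : Subgroup G) [H.Normal]
    (F : Type*) [Field F] [IsAlgClosed F] (n : ℕ)
    (ρ ρ' : G →* (Matrix (Fin n) (Fin n) F)ˣ)
    (hres : ∀ h ∈ H, ρ h = ρ' h)
    (hirr : ∀ T : Matrix (Fin n) (Fin n) F,
      (∀ h ∈ H, T * (ρ h : Matrix (Fin n) (Fin n) F)
        = (ρ h : Matrix (Fin n) (Fin n) F) * T) → ∃ c : F, T = c • (1 : Matrix (Fin n) (Fin n) F)) :
    ∃ χ : G →* Fˣ, (∀ h ∈ H, χ h = 1) ∧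
      ∀ g : G, (ρ' g : Matrix (Fin n) (Fin n) F)
        = (χ g : F) • (ρ g : Matrix (Fin n) (Fin n) F) := by
  rcases Nat.eq_zero_or_pos n with hn | hn
  · refine ⟨1, fun h _ => rfl, fun g => ?_⟩
    subst hn
    apply Subsingleton.elim
  set i0 : Fin n := ⟨0, hn⟩
  have hone : (1 : (Matrix (Fin n) (Fin n) F)) ≠ 0 := by
    intro h
    have := congrFun (congrFun h i0) i0
    rw [Matrix.one_apply_eq, Matrix.zero_apply] at this
    exact one_ne_zero this
  have huniq : ∀ (g : G) (a b : F),
      a • ((ρ g : (Matrix (Fin n) (Fin n) F))) = b • (ρ g : (Matrix (Fin n) (Fin n) F)) → a = b := by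
    intro g a b hab
    have hinv : (ρ g : (Matrix (Fin n) (Fin n) F)) * (((ρ g)⁻¹ : ((Matrix (Fin n) (Fin n) F))ˣ) : (Matrix (Fin n) (Fin n) F)) = 1 := by
      rw [← Units.val_mul, mul_inv_cancel, Units.val_one]
    have h2 : a • (1 : (Matrix (Fin n) (Fin n) F)) = b • (1 : (Matrix (Fin n) (Fin n) F)) := by
      calc a • (1 : (Matrix (Fin n) (Fin n) F)) = a • ((ρ g : (Matrix (Fin n) (Fin n) F)) * (((ρ g)⁻¹ : ((Matrix (Fin n) (Fin n) F))ˣ) : (Matrix (Fin n) (Fin n) F))) := by rw [hinv]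
        _ = (a • (ρ g : (Matrix (Fin n) (Fin n) F))) * (((ρ g)⁻¹ : ((Matrix (Fin n) (Fin n) F))ˣ) : (Matrix (Fin n) (Fin n) F)) := by rw [Matrix.smul_mul]
        _ = (b • (ρ g : (Matrix (Fin n) (Fin n) F))) * (((ρ g)⁻¹ : ((Matrix (Fin n) (Fin n) F))ˣ) : (Matrix (Fin n) (Fin n) F)) := by rw [hab]
        _ = b • ((ρ g : (Matrix (Fin n) (Fin n) F)) * (((ρ g)⁻¹ : ((Matrix (Fin n) (Fin n) F))ˣ) : (Matrix (Fin n) (Fin n) F))) := by rw [Matrix.smul_mul]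
        _ = b • (1 : (Matrix (Fin n) (Fin n) F)) := by rw [hinv]
    have h3 := congrFun (congrFun h2 i0) i0
    simpa [Matrix.one_apply_eq] using h3
  have key : ∀ g : G, ∃ c : F, (ρ' g : (Matrix (Fin n) (Fin n) F)) = c • (ρ g : (Matrix (Fin n) (Fin n) F)) := by
    intro g
    have hcomm : ∀ h ∈ H, ((ρ' g * (ρ g)⁻¹ : ((Matrix (Fin n) (Fin n) F))ˣ) : (Matrix (Fin n) (Fin n) F)) * (ρ h : (Matrix (Fin n) (Fin n) F))
        = (ρ h : (Matrix (Fin n) (Fin n) F)) * ((ρ' g * (ρ g)⁻¹ : ((Matrix (Fin n) (Fin n) F))ˣ) : (Matrix (Fin n) (Fin n) F)) := by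
      intro h hh
      have hmem : g⁻¹ * h * g ∈ H := Subgroup.Normal.conj_mem' ‹H.Normal› h hh g
      have h1 : ρ (g⁻¹ * h * g) = ρ' (g⁻¹ * h * g) := hres _ hmem
      have h2 : ρ h = ρ' h := hres h hh
      simp only [map_mul, map_inv] at h1
      have key : ρ' g * (ρ g)⁻¹ * ρ h = ρ h * (ρ' g * (ρ g)⁻¹) := by
        calc ρ' g * (ρ g)⁻¹ * ρ h
            = ρ' g * ((ρ g)⁻¹ * ρ h * ρ g) * (ρ g)⁻¹ := by group
          _ = ρ' g * ((ρ' g)⁻¹ * ρ' h * ρ' g) * (ρ g)⁻¹ := by rw [h1]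
          _ = ρ' h * (ρ' g * (ρ g)⁻¹) := by group
          _ = ρ h * (ρ' g * (ρ g)⁻¹) := by rw [h2]
      rw [← Units.val_mul, ← Units.val_mul, key]
    obtain ⟨c, hc⟩ := hirr _ hcomm
    refine ⟨c, ?_⟩
    calc (ρ' g : (Matrix (Fin n) (Fin n) F)) = ((ρ' g * (ρ g)⁻¹ * ρ g : ((Matrix (Fin n) (Fin n) F))ˣ) : (Matrix (Fin n) (Fin n) F)) := by
            rw [inv_mul_cancel_right]
      _ = ((ρ' g * (ρ g)⁻¹ : ((Matrix (Fin n) (Fin n) F))ˣ) : (Matrix (Fin n) (Fin n) F)) * (ρ g : (Matrix (Fin n) (Fin n) F)) := Units.val_mul _ _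
      _ = (c • (1 : (Matrix (Fin n) (Fin n) F))) * (ρ g : (Matrix (Fin n) (Fin n) F)) := by rw [hc]
      _ = c • (ρ g : (Matrix (Fin n) (Fin n) F)) := by rw [Matrix.smul_mul, one_mul]
  choose c hc using key
  have hc0 : ∀ g, c g ≠ 0 := by
    intro g h0
    have h1 : ((((ρ' g)⁻¹ : ((Matrix (Fin n) (Fin n) F))ˣ)) : (Matrix (Fin n) (Fin n) F)) * (ρ' g : (Matrix (Fin n) (Fin n) F)) = 1 := by
      rw [← Units.val_mul, inv_mul_cancel, Units.val_one]
    rw [hc g, h0, zero_smul, mul_zero] at h1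
    exact hone h1.symm
  have hmul : ∀ g₁ g₂ : G, c (g₁ * g₂) = c g₁ * c g₂ := by
    intro g₁ g₂
    apply huniq (g₁ * g₂)
    rw [← hc (g₁ * g₂), map_mul, map_mul, Units.val_mul, Units.val_mul, hc g₁, hc g₂,
      Matrix.smul_mul, Matrix.mul_smul, smul_smul]
  refine ⟨{ toFun := fun g => Units.mk0 (c g) (hc0 g),
            map_one' := ?_, map_mul' := ?_ }, ?_, ?_⟩
  · ext
    show c 1 = 1
    apply huniq 1
    rw [← hc 1, one_smul, map_one, map_one]
  · intro g₁ g₂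
    ext
    exact hmul g₁ g₂
  · intro h hh
    ext
    show c h = 1
    apply huniq h
    rw [← hc h, one_smul, hres h hh]
  · intro g
    exact hc g
end

section
/- Let R be a commutative ring, τ : R → R a ring automorphism with τ^h = id for some h ≥ 1, and extend τ entrywise to matrices. Let A ∈ GL(r, R) and set B := A · τ(A) · τ²(A) · ... · τ^{h-1}(A). Then τ(B) = A^{-1} · B · A, and consequently the characteristic polynomial of B has all its coefficients fixed by τ. -/
/-- For a ring automorphism `τ` with `τ^h = id` and an invertible matrix `A`,
the twisted product `B = A · τ(A) · ⋯ · τ^{h-1}(A)` satisfies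
`τ(B) = A⁻¹ B A`, and the coefficients of its characteristic polynomial are
fixed by `τ`. -/
theorem stmt_3 {R : Type*} [CommRing R] (τ : RingAut R) (h : ℕ) (hh : 1 ≤ h)
    (hτ : τ ^ h = 1) (r : ℕ) (A : Matrix (Fin r) (Fin r) R) (hA : IsUnit A) :
    letI B : Matrix (Fin r) (Fin r) R :=
      ((List.range h).map (fun i => A.map ⇑(τ ^ i))).prod
    B.map ⇑τ = A⁻¹ * B * A ∧ ∀ i : ℕ, τ (B.charpoly.coeff i) = B.charpoly.coeff i := by
  set B : Matrix (Fin r) (Fin r) R := ((List.range h).map (fun i => A.map ⇑(τ ^ i))).prod with hB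
  set g : ℕ → Matrix (Fin r) (Fin r) R := fun i => A.map ⇑(τ ^ i) with hg
  have hmapfn : ∀ i : ℕ, (g i).map ⇑τ = g (i + 1) := by
    intro i
    simp only [hg, Matrix.map_map]
    congr 1
    rw [pow_succ']
    rfl
  have hone : ∀ x : R, (1 : RingAut R) x = x := fun x => rfl
  have hBmap : B.map ⇑τ = ((List.range h).map (fun i => g (i + 1))).prod := by
    have : B.map ⇑τ = (τ.toRingHom.mapMatrix : Matrix (Fin r) (Fin r) R →+* _)
        (((List.range h).map g).prod) := rfl
    rw [this, map_list_prod, List.map_map]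
    congr 1
    apply List.map_congr_left
    intro i _
    exact hmapfn i
  have hgh : g h = A := by
    simp only [hg, hτ]
    ext i j
    exact hone _
  have hg0 : g 0 = A := by
    ext i j
    rw [hg]
    simp only [pow_zero]
    exact hone _
  have key : A * B.map ⇑τ = B * A := by
    rw [hBmap]
    have h1 : A * ((List.range h).map (fun i => g (i + 1))).prod
        = ((List.range (h + 1)).map g).prod := by
      rw [List.range_succ_eq_map, List.map_cons, List.prod_cons, List.map_map]
      rw [hg0]
      rfl
    have h2 : B * A = ((List.range (h + 1)).map g).prod := by
      rw [List.range_succ, List.map_append, List.prod_append]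
      simp [hgh, hB]
    rw [h1, h2]
  have hdet : IsUnit A.det := (Matrix.isUnit_iff_isUnit_det A).mp hA
  have part1 : B.map ⇑τ = A⁻¹ * B * A := by
    calc B.map ⇑τ = A⁻¹ * (A * B.map ⇑τ) := by
          rw [← mul_assoc, Matrix.nonsing_inv_mul A hdet, one_mul]
      _ = A⁻¹ * (B * A) := by rw [key]
      _ = A⁻¹ * B * A := by rw [mul_assoc]
  refine ⟨part1, fun i => ?_⟩
  have hc : B.charmatrix * A.map ⇑(Polynomial.C : R →+* Polynomial R)
      = A.map ⇑(Polynomial.C : R →+* Polynomial R) * (B.map ⇑τ).charmatrix := by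
    unfold Matrix.charmatrix
    rw [sub_mul, mul_sub]
    congr 1
    · exact (Matrix.scalar_commute Polynomial.X (fun r' => Commute.all _ _) _).eq
    · rw [RingHom.mapMatrix_apply, RingHom.mapMatrix_apply, ← Matrix.map_mul, ← Matrix.map_mul,
        key]
  have hdet' : IsUnit (A.map ⇑(Polynomial.C : R →+* Polynomial R)).det := by
    have h0 := RingHom.map_det (Polynomial.C : R →+* Polynomial R) A
    rw [RingHom.mapMatrix_apply] at h0
    rw [← h0]
    exact hdet.map Polynomial.C
  have hcp : (B.map ⇑τ).charpoly = B.charpoly := by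
    have := congrArg Matrix.det hc
    rw [Matrix.det_mul, Matrix.det_mul] at this
    unfold Matrix.charpoly
    exact (hdet'.mul_left_cancel (by rw [← this, mul_comm])).symm
  have hmap := Matrix.charpoly_map B (τ : R →+* R)
  have hrfl : B.map ⇑(τ : R →+* R) = B.map ⇑τ := rfl
  rw [hrfl, hcp] at hmap
  conv_rhs => rw [hmap]
  rw [Polynomial.coeff_map]
  rfl
end

section
/- Let R be a commutative ring in which 2 is invertible, and let I be an ideal of R with I² = 0. Let g ≥ 1 and let A ∈ M_{2g}(R) be a symmetric matrix written in g×g blocks A = [[A₁₁, A₁₂],[A₂₁, A₂₂]] with A₂₁ = A₁₂ᵀ, such that every entry of A₁₁ lies in I and A₁₂ is invertible. Then there exists a matrix Q ∈ M_g(R) with all entries in I such that the (1,1) block of [[1, Qᵀ],[0,1]] · A · [[1, 0],[Q, 1]] is the zero matrix. -/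
open Matrix

/-- Local lifting of a Lagrangian-type block across a square-zero thickening:
a symmetric block matrix with `A₁₁` in `I`, `I² = 0`, and `A₁₂` invertible can
be transformed so that its `(1,1)` block vanishes, by a matrix `Q` with entries
in `I`. -/
theorem stmt_11 {R : Type*} [CommRing R] (h2 : IsUnit (2 : R))
    (I : Ideal R) (hI : I ^ 2 = ⊥) (g : ℕ) (hg : 1 ≤ g)
    (A₁₁ A₁₂ A₂₁ A₂₂ : Matrix (Fin g) (Fin g) R)
    (hsymm : (Matrix.fromBlocks A₁₁ A₁₂ A₂₁ A₂₂)ᵀ = Matrix.fromBlocks A₁₁ A₁₂ A₂₁ A₂₂)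
    (hA21 : A₂₁ = A₁₂ᵀ)
    (hA11 : ∀ i j, A₁₁ i j ∈ I) (hA12 : IsUnit A₁₂) :
    ∃ Q : Matrix (Fin g) (Fin g) R, (∀ i j, Q i j ∈ I) ∧
      (Matrix.fromBlocks 1 Qᵀ 0 1 * Matrix.fromBlocks A₁₁ A₁₂ A₂₁ A₂₂ *
        Matrix.fromBlocks 1 0 Q 1).toBlocks₁₁ = 0 := by
  -- A₁₁ is symmetric
  have hA11symm : A₁₁ᵀ = A₁₁ := by
    have := congrArg Matrix.toBlocks₁₁ hsymm
    simpa [Matrix.fromBlocks_transpose] using this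
  -- products of two elements of I vanish
  have hprod : ∀ a b : R, a ∈ I → b ∈ I → a * b = 0 := by
    intro a b ha hb
    have : a * b ∈ I ^ 2 := by
      rw [pow_two]; exact Ideal.mul_mem_mul ha hb
    simpa [hI] using this
  obtain ⟨u, hu⟩ := hA12
  set c : R := ↑h2.unit⁻¹ with hc
  have h2c : (2 : R) * c = 1 := by
    simp [hc]
  set Q : Matrix (Fin g) (Fin g) R := -(c • ((↑u⁻¹ : Matrix (Fin g) (Fin g) R) * A₁₁))
    with hQ
  have hQmem : ∀ i j, Q i j ∈ I := by
    intro i j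
    have : ((↑u⁻¹ : Matrix (Fin g) (Fin g) R) * A₁₁) i j ∈ I := by
      rw [Matrix.mul_apply]
      exact Ideal.sum_mem _ fun k _ => Ideal.mul_mem_left _ _ (hA11 k j)
    simpa [hQ] using neg_mem (Ideal.mul_mem_left _ c this)
  have hAQ : A₁₂ * Q = -(c • A₁₁) := by
    have : A₁₂ * ((↑u⁻¹ : Matrix (Fin g) (Fin g) R) * A₁₁) = A₁₁ := by
      rw [← Matrix.mul_assoc, ← hu, u.mul_inv, Matrix.one_mul]
    rw [hQ, Matrix.mul_neg, Matrix.mul_smul, this]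
  have hQT : Qᵀ * A₂₁ = -(c • A₁₁) := by
    calc Qᵀ * A₂₁ = Qᵀ * A₁₂ᵀ := by rw [hA21]
    _ = (A₁₂ * Q)ᵀ := by rw [Matrix.transpose_mul]
    _ = -(c • A₁₁) := by rw [hAQ]; simp [Matrix.transpose_smul, hA11symm]
  have hzero : Qᵀ * A₂₂ * Q = 0 := by
    ext i j
    rw [Matrix.mul_apply, Matrix.zero_apply]
    refine Finset.sum_eq_zero fun k _ => ?_
    have h1 : (Qᵀ * A₂₂) i k ∈ I := by
      rw [Matrix.mul_apply]
      refine Ideal.sum_mem _ fun l _ => Ideal.mul_mem_right _ _ ?_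
      simpa [Matrix.transpose_apply] using hQmem l i
    exact hprod _ _ h1 (hQmem k j)
  have key : A₁₁ + Qᵀ * A₂₁ + (A₁₂ * Q + Qᵀ * A₂₂ * Q) = 0 := by
    rw [hAQ, hQT, hzero]
    have h1 : (1 : R) • A₁₁ = (2 * c) • A₁₁ := by rw [h2c]
    rw [one_smul, two_mul, add_smul] at h1
    nth_rewrite 1 [h1]
    abel
  refine ⟨Q, hQmem, ?_⟩
  simp only [Matrix.fromBlocks_multiply, Matrix.toBlocks_fromBlocks₁₁,
    Matrix.one_mul, Matrix.mul_one, Matrix.zero_mul, Matrix.mul_zero,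
    Matrix.add_mul, zero_add, add_zero]
  calc A₁₁ + Qᵀ * A₂₁ + (A₁₂ * Q + Qᵀ * A₂₂ * Q)
      = 0 := key
end
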